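/- Suppose ≽ satisfies A1 (weak order), weak separability (A2), A3, A4, restricted solvability (A8), the Archimedean axiom (A9), and order density, and suppose both coordinates are essential on SE and on NW. Let SE* = ⋃_{z ∈ Θ \ SE_ext} SE(z) and NW* = ⋃_{z ∈ Θ \ NW_ext} NW(z), and let D₁ = {a ∈ X₁ : (∃p ∈ X₂, ap ∈ SE*) and (∃q ∈ X₂, aq ∈ NW*)}. Suppose (V₁ˢ,V₂ˢ) additively represents ≽ on SE(z) for every z ∈ Θ \ SE_ext, and (V₁ⁿ,V₂ⁿ) additively represents ≽ on NW(z) for every z ∈ Θ \ NW_ext. Suppose r⁰, r¹ ∈ D₁ satisfy r¹ ≽₁ r⁰ and not r⁰ ≽₁ r¹, and the normalizations V₁ˢ(r⁰) = V₁ⁿ(r⁰) = 0 and V₁ˢ(r¹) = V₁ⁿ(r¹) = 1 hold. Then V₁ˢ(a) = V₁ⁿ(a) for every a ∈ D₁. -/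

import Mathlib

open Set
open scoped Classical

section ChoquetAxioms

variable {X₁ X₂ : Type*}

/-- Asymmetric (strict) part of a relation. -/
def SP (R : X₁ × X₂ → X₁ × X₂ → Prop) (x y : X₁ × X₂) : Prop := R x y ∧ ¬ R y x

/-- Symmetric (indifference) part of a relation. -/
def IP (R : X₁ × X₂ → X₁ × X₂ → Prop) (x y : X₁ × X₂) : Prop := R x y ∧ R y x

/-- Triple cancellation on a set `A`. -/
def TCancel (R : X₁ × X₂ → X₁ × X₂ → Prop) (A : Set (X₁ × X₂)) : Prop :=
  ∀ a b c d : X₁, ∀ p q r s : X₂,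
    (a,p) ∈ A → (b,q) ∈ A → (a,r) ∈ A → (b,s) ∈ A →
    (c,p) ∈ A → (d,q) ∈ A → (c,r) ∈ A → (d,s) ∈ A →
    R (b,q) (a,p) → R (a,r) (b,s) → R (c,p) (d,q) → R (c,r) (d,s)

/-- A1: weak order (complete and transitive). -/
def A1 (R : X₁ × X₂ → X₁ × X₂ → Prop) : Prop :=
  (∀ x y, R x y ∨ R y x) ∧ (∀ x y z, R x y → R y z → R x z)

/-- A2: weak separability. -/
def A2 (R : X₁ × X₂ → X₁ × X₂ → Prop) : Prop :=
  (∀ a b : X₁, ∀ p : X₂, SP R (a,p) (b,p) → ∀ q : X₂, R (a,q) (b,q)) ∧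
  (∀ p q : X₂, ∀ a : X₁, SP R (a,p) (a,q) → ∀ b : X₁, R (b,p) (b,q))

/-- Induced order on the first coordinate. -/
def Ge1 (R : X₁ × X₂ → X₁ × X₂ → Prop) (a b : X₁) : Prop := ∀ p : X₂, R (a,p) (b,p)

/-- Induced order on the second coordinate. -/
def Ge2 (R : X₁ × X₂ → X₁ × X₂ → Prop) (p q : X₂) : Prop := ∀ a : X₁, R (a,p) (a,q)

def Max1 (R : X₁ × X₂ → X₁ × X₂ → Prop) (a : X₁) : Prop := ∀ b : X₁, Ge1 R a b
def Min1 (R : X₁ × X₂ → X₁ × X₂ → Prop) (a : X₁) : Prop := ∀ b : X₁, Ge1 R b a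
def Max2 (R : X₁ × X₂ → X₁ × X₂ → Prop) (p : X₂) : Prop := ∀ q : X₂, Ge2 R p q
def Min2 (R : X₁ × X₂ → X₁ × X₂ → Prop) (p : X₂) : Prop := ∀ q : X₂, Ge2 R q p

/-- The south-east rectangular cone at `z`. -/
def SEz (R : X₁ × X₂ → X₁ × X₂ → Prop) (z : X₁ × X₂) : Set (X₁ × X₂) :=
  {x | Ge1 R x.1 z.1 ∧ Ge2 R z.2 x.2}

/-- The north-west rectangular cone at `z`. -/
def NWz (R : X₁ × X₂ → X₁ × X₂ → Prop) (z : X₁ × X₂) : Set (X₁ × X₂) :=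
  {x | Ge2 R x.2 z.2 ∧ Ge1 R z.1 x.1}

/-- A3: at every point, triple cancellation holds on `SEz z` or on `NWz z`. -/
def A3 (R : X₁ × X₂ → X₁ × X₂ → Prop) : Prop :=
  ∀ z : X₁ × X₂, TCancel R (SEz R z) ∨ TCancel R (NWz R z)

/-- The region SE. -/
def SEreg (R : X₁ × X₂ → X₁ × X₂ → Prop) : Set (X₁ × X₂) :=
  {x | (∃ z : X₁ × X₂, ¬ Max1 R z.1 ∧ ¬ Min2 R z.2 ∧ TCancel R (SEz R z) ∧ x ∈ SEz R z) ∨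
       ((Max1 R x.1 ∨ Min2 R x.2) ∧ ∀ y ∈ SEz R x, y ≠ x → ¬ TCancel R (NWz R y))}

/-- The region NW. -/
def NWreg (R : X₁ × X₂ → X₁ × X₂ → Prop) : Set (X₁ × X₂) :=
  {x | (∃ z : X₁ × X₂, ¬ Min1 R z.1 ∧ ¬ Max2 R z.2 ∧ TCancel R (NWz R z) ∧ x ∈ NWz R z) ∨
       ((Min1 R x.1 ∨ Max2 R x.2) ∧ ∀ y ∈ NWz R x, y ≠ x → ¬ TCancel R (SEz R y))}

/-- Θ = SE ∩ NW. -/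
def Theta (R : X₁ × X₂ → X₁ × X₂ → Prop) : Set (X₁ × X₂) := SEreg R ∩ NWreg R

/-- Extreme points of SE. -/
def SEext (R : X₁ × X₂ → X₁ × X₂ → Prop) : Set (X₁ × X₂) :=
  {x | x ∈ Theta R ∧ (Min2 R x.2 ∨ Max1 R x.1)}

/-- Extreme points of NW. -/
def NWext (R : X₁ × X₂ → X₁ × X₂ → Prop) : Set (X₁ × X₂) :=
  {x | x ∈ Theta R ∧ (Min1 R x.1 ∨ Max2 R x.2)}

/-- Coordinate 1 is essential on `A`. -/
def Ess1 (R : X₁ × X₂ → X₁ × X₂ → Prop) (A : Set (X₁ × X₂)) : Prop :=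
  ∃ a b : X₁, ∃ p : X₂, (a,p) ∈ A ∧ (b,p) ∈ A ∧ SP R (a,p) (b,p)

/-- Coordinate 2 is essential on `A`. -/
def Ess2 (R : X₁ × X₂ → X₁ × X₂ → Prop) (A : Set (X₁ × X₂)) : Prop :=
  ∃ p q : X₂, ∃ a : X₁, (a,p) ∈ A ∧ (a,q) ∈ A ∧ SP R (a,p) (a,q)

/-- Four points all belonging to a set. -/
def In4 (A : Set (X₁ × X₂)) (w x y z : X₁ × X₂) : Prop :=
  w ∈ A ∧ x ∈ A ∧ y ∈ A ∧ z ∈ A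

/-- A4. -/
def A4 (R : X₁ × X₂ → X₁ × X₂ → Prop) : Prop :=
  ∀ a b c d : X₁, ∀ p q r s : X₂,
    ((In4 (NWreg R) (a,p) (b,q) (a,r) (b,s) ∧ In4 (NWreg R) (c,p) (d,q) (c,r) (d,s)) ∨
     (In4 (SEreg R) (a,p) (b,q) (a,r) (b,s) ∧ In4 (SEreg R) (c,p) (d,q) (c,r) (d,s)) ∨
     (In4 (NWreg R) (a,p) (b,q) (a,r) (b,s) ∧ Ess2 R (NWreg R) ∧
        In4 (SEreg R) (c,p) (d,q) (c,r) (d,s)) ∨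
     (In4 (SEreg R) (a,p) (b,q) (a,r) (b,s) ∧ Ess2 R (SEreg R) ∧
        In4 (NWreg R) (c,p) (d,q) (c,r) (d,s)) ∨
     (In4 (NWreg R) (a,p) (b,q) (c,p) (d,q) ∧ Ess1 R (NWreg R) ∧
        In4 (SEreg R) (a,r) (b,s) (c,r) (d,s)) ∨
     (In4 (SEreg R) (a,p) (b,q) (c,p) (d,q) ∧ Ess1 R (SEreg R) ∧
        In4 (NWreg R) (a,r) (b,s) (c,r) (d,s))) →
    R (b,q) (a,p) → R (a,r) (b,s) → R (c,p) (d,q) → R (c,r) (d,s)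

/-- One half of A5 (stated for the given coordinate order). -/
def A5half (R : X₁ × X₂ → X₁ × X₂ → Prop) : Prop :=
  ∀ a b c d e g x₀ x₁ : X₁, ∀ p q y₀ y₁ πa πb πc πd : X₂,
    ((In4 (NWreg R) (a,p) (b,q) (c,p) (d,q) ∧ Ess1 R (NWreg R)) ∨
     (In4 (SEreg R) (a,p) (b,q) (c,p) (d,q) ∧ Ess1 R (SEreg R))) →
    (In4 (NWreg R) (a,y₀) (b,y₀) (c,y₁) (d,y₁) ∨
     In4 (SEreg R) (a,y₀) (b,y₀) (c,y₁) (d,y₁)) →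
    ((In4 (NWreg R) (x₀,πa) (x₀,πb) (x₁,πc) (x₁,πd) ∧ Ess2 R (NWreg R)) ∨
     (In4 (SEreg R) (x₀,πa) (x₀,πb) (x₁,πc) (x₁,πd) ∧ Ess2 R (SEreg R))) →
    (In4 (NWreg R) (e,πa) (g,πb) (e,πc) (g,πd) ∨
     In4 (SEreg R) (e,πa) (g,πb) (e,πc) (g,πd)) →
    R (b,q) (a,p) → R (c,p) (d,q) →
    IP R (a,y₀) (x₀,πa) → IP R (b,y₀) (x₀,πb) →
    IP R (c,y₁) (x₁,πc) → IP R (d,y₁) (x₁,πd) →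
    R (e,πa) (g,πb) → R (e,πc) (g,πd)

/-- The relation with the roles of the two coordinates exchanged. -/
def swapRel (R : X₁ × X₂ → X₁ × X₂ → Prop) : X₂ × X₁ → X₂ × X₁ → Prop :=
  fun x y => R (x.2, x.1) (y.2, y.1)

/-- A5 : the condition together with its symmetric (coordinate-exchanged) version. -/
def A5 (R : X₁ × X₂ → X₁ × X₂ → Prop) : Prop :=
  A5half R ∧ A5half (swapRel R)

/-- A6 : bi-independence. -/
def A6 (R : X₁ × X₂ → X₁ × X₂ → Prop) : Prop :=
  (∀ a b c d : X₁, ∀ p : X₂,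
    (In4 (SEreg R) (a,p) (b,p) (c,p) (d,p) ∨ In4 (NWreg R) (a,p) (b,p) (c,p) (d,p)) →
    SP R (a,p) (b,p) → (∃ q : X₂, SP R (c,q) (d,q)) → SP R (c,p) (d,p)) ∧
  (∀ p q r s : X₂, ∀ a : X₁,
    (In4 (SEreg R) (a,p) (a,q) (a,r) (a,s) ∨ In4 (NWreg R) (a,p) (a,q) (a,r) (a,s)) →
    SP R (a,p) (a,q) → (∃ b : X₁, SP R (b,r) (b,s)) → SP R (a,r) (a,s))

/-- A7 : both coordinates are essential on X. -/
def A7 (R : X₁ × X₂ → X₁ × X₂ → Prop) : Prop :=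
  Ess1 R Set.univ ∧ Ess2 R Set.univ

/-- A8 : restricted solvability. -/
def A8 (R : X₁ × X₂ → X₁ × X₂ → Prop) : Prop :=
  (∀ a : X₁, ∀ p r : X₂, ∀ y : X₁ × X₂,
    R (a,p) y → R y (a,r) → ∃ b : X₂, IP R (a,b) y) ∧
  (∀ p : X₂, ∀ a c : X₁, ∀ y : X₁ × X₂,
    R (a,p) y → R y (c,p) → ∃ b : X₁, IP R (b,p) y)

/-- `S` is an interval of integers. -/
def IsIntervalZ (S : Set ℤ) : Prop :=
  ∀ i j k : ℤ, i ≤ j → j ≤ k → i ∈ S → k ∈ S → j ∈ S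

/-- Standard sequence on X₁. -/
def StdSeq1 (R : X₁ × X₂ → X₁ × X₂ → Prop) (S : Set ℤ) (g : ℤ → X₁) (y₀ y₁ : X₂) : Prop :=
  IsIntervalZ S ∧ ¬ (Ge2 R y₀ y₁ ∧ Ge2 R y₁ y₀) ∧
  ∀ i, i ∈ S → (i+1) ∈ S → IP R (g i, y₀) (g (i+1), y₁)

def BoundedSeq1 (R : X₁ × X₂ → X₁ × X₂ → Prop) (S : Set ℤ) (g : ℤ → X₁) (y₀ : X₂) : Prop :=
  ∃ u v : X₁ × X₂, ∀ i ∈ S, R u (g i, y₀) ∧ R (g i, y₀) v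

/-- Standard sequence on X₂. -/
def StdSeq2 (R : X₁ × X₂ → X₁ × X₂ → Prop) (S : Set ℤ) (h : ℤ → X₂) (x₀ x₁ : X₁) : Prop :=
  IsIntervalZ S ∧ ¬ (Ge1 R x₀ x₁ ∧ Ge1 R x₁ x₀) ∧
  ∀ i, i ∈ S → (i+1) ∈ S → IP R (x₀, h i) (x₁, h (i+1))

def BoundedSeq2 (R : X₁ × X₂ → X₁ × X₂ → Prop) (S : Set ℤ) (h : ℤ → X₂) (x₀ : X₁) : Prop :=
  ∃ u v : X₁ × X₂, ∀ i ∈ S, R u (x₀, h i) ∧ R (x₀, h i) v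

/-- A9 : Archimedean axiom. -/
def A9 (R : X₁ × X₂ → X₁ × X₂ → Prop) : Prop :=
  (∀ z ∈ NWreg R, ∀ (S : Set ℤ) (g : ℤ → X₁) (y₀ y₁ : X₂),
    StdSeq1 R S g y₀ y₁ → BoundedSeq1 R S g y₀ →
    (∀ i ∈ S, (g i, y₀) ∈ NWz R z ∧ (g i, y₁) ∈ NWz R z) → S.Finite) ∧
  (∀ z ∈ SEreg R, ∀ (S : Set ℤ) (g : ℤ → X₁) (y₀ y₁ : X₂),
    StdSeq1 R S g y₀ y₁ → BoundedSeq1 R S g y₀ →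
    (∀ i ∈ S, (g i, y₀) ∈ SEz R z ∧ (g i, y₁) ∈ SEz R z) → S.Finite) ∧
  (∀ z ∈ NWreg R, ∀ (S : Set ℤ) (h : ℤ → X₂) (x₀ x₁ : X₁),
    StdSeq2 R S h x₀ x₁ → BoundedSeq2 R S h x₀ →
    (∀ i ∈ S, (x₀, h i) ∈ NWz R z ∧ (x₁, h i) ∈ NWz R z) → S.Finite) ∧
  (∀ z ∈ SEreg R, ∀ (S : Set ℤ) (h : ℤ → X₂) (x₀ x₁ : X₁),
    StdSeq2 R S h x₀ x₁ → BoundedSeq2 R S h x₀ →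
    (∀ i ∈ S, (x₀, h i) ∈ SEz R z ∧ (x₁, h i) ∈ SEz R z) → S.Finite)

/-- Structural assumption. -/
def Structural (R : X₁ × X₂ → X₁ × X₂ → Prop) : Prop :=
  (∀ a b : X₁, a ≠ b → ¬ ∀ p : X₂, IP R (a,p) (b,p)) ∧
  (∀ p q : X₂, p ≠ q → ¬ ∀ a : X₁, IP R (a,p) (a,q))

/-- Order density. -/
def OrderDense (R : X₁ × X₂ → X₁ × X₂ → Prop) : Prop :=
  ∀ x y : X₁ × X₂, SP R x y → ∃ z : X₁ × X₂, SP R x z ∧ SP R z y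

/-- Closedness of SE and NW. -/
def Closedness (R : X₁ × X₂ → X₁ × X₂ → Prop) : Prop :=
  (∀ a b : X₁, ∀ p : X₂, (a,p) ∉ NWreg R → (b,p) ∉ SEreg R →
    ∃ c : X₁, (c,p) ∈ Theta R) ∧
  (∀ a : X₁, ∀ p q : X₂, (a,p) ∉ NWreg R → (a,q) ∉ SEreg R →
    ∃ r : X₂, (a,r) ∈ Theta R)

/-- A capacity on the two-element set (coordinate 1 ↦ `0`, coordinate 2 ↦ `1`). -/
structure Capacity where
  ν : Set (Fin 2) → ℝ
  empty' : ν ∅ = 0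
  mono' : ∀ A B : Set (Fin 2), A ⊆ B → ν A ≤ ν B
  norm' : ν Set.univ = 1

/-- Two-point Choquet integral. -/
noncomputable def Choq (c : Capacity) (t₁ t₂ : ℝ) : ℝ :=
  if t₂ ≤ t₁ then c.ν {0} * t₁ + (1 - c.ν {0}) * t₂
  else (1 - c.ν {1}) * t₁ + c.ν {1} * t₂

/-- `ν` together with `(f₁, f₂)` represents `R`. -/
def Represents (c : Capacity) (f₁ : X₁ → ℝ) (f₂ : X₂ → ℝ)
    (R : X₁ × X₂ → X₁ × X₂ → Prop) : Prop :=
  ∀ x y : X₁ × X₂, R x y ↔ Choq c (f₁ y.1) (f₂ y.2) ≤ Choq c (f₁ x.1) (f₂ x.2)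

/-- `(V₁, V₂)` additively represents `R` on `A`. -/
def AddRep (R : X₁ × X₂ → X₁ × X₂ → Prop) (V₁ : X₁ → ℝ) (V₂ : X₂ → ℝ)
    (A : Set (X₁ × X₂)) : Prop :=
  ∀ x ∈ A, ∀ y ∈ A, (R x y ↔ V₁ y.1 + V₂ y.2 ≤ V₁ x.1 + V₂ x.2)

/-- `Φ` represents `R` on `A`. -/
def RepOn (R : X₁ × X₂ → X₁ × X₂ → Prop) (Φ : X₁ × X₂ → ℝ) (A : Set (X₁ × X₂)) : Prop :=
  ∀ x ∈ A, ∀ y ∈ A, (R x y ↔ Φ y ≤ Φ x)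


/-- `S` union of non-extreme SE cones. -/
def SEstar (R : X₁ × X₂ → X₁ × X₂ → Prop) : Set (X₁ × X₂) :=
  ⋃ z ∈ Theta R \ SEext R, SEz R z

/-- Union of non-extreme NW cones. -/
def NWstar (R : X₁ × X₂ → X₁ × X₂ → Prop) : Set (X₁ × X₂) :=
  ⋃ z ∈ Theta R \ NWext R, NWz R z

/-- First coordinates appearing both in `SEstar` and `NWstar`. -/
def D1 (R : X₁ × X₂ → X₁ × X₂ → Prop) : Set X₁ :=
  {a | (∃ p : X₂, (a,p) ∈ SEstar R) ∧ (∃ q : X₂, (a,q) ∈ NWstar R)}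

/-- Second coordinates appearing both in `SEstar` and `NWstar`. -/
def D2 (R : X₁ × X₂ → X₁ × X₂ → Prop) : Set X₂ :=
  {p | (∃ a : X₁, (a,p) ∈ SEstar R) ∧ (∃ b : X₁, (b,p) ∈ NWstar R)}

end ChoquetAxioms

/-!
On the strip of first coordinates lying between a non-extreme SE cone and a non-extreme NW cone,
both `V₁s` and `V₁n` represent `≽₁`. Case (c) of A4 transfers indifferences between the two cones:
once a single pair `b₀, b₁` is related both by a NW step `(b₁,q) ∼ (b₀,p)` and by a SE step
`(b₁,s) ∼ (b₀,r)`, every pair related by the NW step is related by the SE step and conversely.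
Hence NW steps of size `δ` in `V₁n` are exactly the SE steps of some fixed size `δ'` in `V₁s`, and
counting steps (built by restricted solvability) shows that `V₁n`-differences read in units of `δ`
and `V₁s`-differences read in units of `δ'` agree to within one unit. Order density makes `δ`
arbitrarily small, so `V₁s` and `V₁n` are affinely related on the strip, and the normalization at
`r0, r1` makes the affine map the identity. The calibrating pair comes from a pigeonhole argument:
among the roughly `1/δ` NW steps from `r0` to `r1`, one has a `V₁s`-increment small enough to be
realized by a vertical step inside the SE cone.
-/

section WeakOrder

variable {X₁ X₂ : Type*} {R : X₁ × X₂ → X₁ × X₂ → Prop}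

theorem A1.refl (h1 : A1 R) (x : X₁ × X₂) : R x x := (h1.1 x x).elim id id

theorem A1.trans (h1 : A1 R) {x y z : X₁ × X₂} : R x y → R y z → R x z := h1.2 x y z

theorem A1.ge1_refl (h1 : A1 R) (a : X₁) : Ge1 R a a := fun p => h1.refl (a, p)

theorem A1.ge2_refl (h1 : A1 R) (p : X₂) : Ge2 R p p := fun a => h1.refl (a, p)

theorem A1.ge1_trans (h1 : A1 R) {a b c : X₁} (hab : Ge1 R a b) (hbc : Ge1 R b c) :
    Ge1 R a c :=
  fun p => h1.trans (hab p) (hbc p)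

theorem A1.ge2_trans (h1 : A1 R) {p q r : X₂} (hpq : Ge2 R p q) (hqr : Ge2 R q r) :
    Ge2 R p r :=
  fun a => h1.trans (hpq a) (hqr a)

theorem IP.symm {x y : X₁ × X₂} (h : IP R x y) : IP R y x := ⟨h.2, h.1⟩

theorem A1.sp_of_sp_of_ip (h1 : A1 R) {x y z : X₁ × X₂} (hxy : SP R x y) (hyz : IP R y z) :
    SP R x z :=
  ⟨h1.trans hxy.1 hyz.1, fun h => hxy.2 (h1.trans hyz.1 h)⟩

theorem A1.sp_of_ip_of_sp (h1 : A1 R) {x y z : X₁ × X₂} (hxy : IP R x y) (hyz : SP R y z) :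
    SP R x z :=
  ⟨h1.trans hxy.1 hyz.1, fun h => hyz.2 (h1.trans h hxy.1)⟩

theorem A2.ge1_of_sp (h2 : A2 R) {a b : X₁} {p : X₂} (h : SP R (a, p) (b, p)) : Ge1 R a b :=
  h2.1 a b p h

theorem A2.ge2_of_sp (h2 : A2 R) {p q : X₂} {a : X₁} (h : SP R (a, p) (a, q)) : Ge2 R p q :=
  h2.2 p q a h

theorem ge1_of_not_ge1 (h1 : A1 R) (h2 : A2 R) {a b : X₁} (h : ¬ Ge1 R a b) : Ge1 R b a := by
  obtain ⟨p, hp⟩ : ∃ p, ¬ R (a, p) (b, p) := by simpa [Ge1] using h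
  exact h2.ge1_of_sp ⟨(h1.1 _ _).resolve_left hp, hp⟩

theorem ge2_of_not_ge2 (h1 : A1 R) (h2 : A2 R) {p q : X₂} (h : ¬ Ge2 R p q) : Ge2 R q p := by
  obtain ⟨a, ha⟩ : ∃ a, ¬ R (a, p) (a, q) := by simpa [Ge2] using h
  exact h2.ge2_of_sp ⟨(h1.1 _ _).resolve_left ha, ha⟩

theorem ge1_total (h1 : A1 R) (h2 : A2 R) (a b : X₁) : Ge1 R a b ∨ Ge1 R b a :=
  (em _).imp_right (ge1_of_not_ge1 h1 h2)

theorem A8.exists_ip_fst (h8 : A8 R) (h1 : A1 R) (h2 : A2 R) {c m : X₁} {v : X₂}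
    {y : X₁ × X₂} (hmc : Ge1 R m c) (hm : R (m, v) y) (hc : R y (c, v)) :
    ∃ d, IP R (d, v) y ∧ Ge1 R m d ∧ Ge1 R d c := by
  obtain ⟨d, hd⟩ := h8.2 v m c y hm hc
  by_cases hmd : Ge1 R m d
  · by_cases hdc : Ge1 R d c
    · exact ⟨d, hd, hmd, hdc⟩
    · exact ⟨c, ⟨h1.trans (ge1_of_not_ge1 h1 h2 hdc v) hd.1, hc⟩, hmc, h1.ge1_refl c⟩
  · exact ⟨m, ⟨hm, h1.trans hd.2 (ge1_of_not_ge1 h1 h2 hmd v)⟩, h1.ge1_refl m, hmc⟩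

theorem A8.exists_ip_snd (h8 : A8 R) (h1 : A1 R) (h2 : A2 R) {a : X₁} {r s : X₂}
    {y : X₁ × X₂} (hsr : Ge2 R s r) (hs : R (a, s) y) (hr : R y (a, r)) :
    ∃ t, IP R (a, t) y ∧ Ge2 R s t ∧ Ge2 R t r := by
  obtain ⟨t, ht⟩ := h8.1 a s r y hs hr
  by_cases hst : Ge2 R s t
  · by_cases htr : Ge2 R t r
    · exact ⟨t, ht, hst, htr⟩
    · exact ⟨r, ⟨h1.trans (ge2_of_not_ge2 h1 h2 htr a) ht.1, hr⟩, hsr, h1.ge2_refl r⟩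
  · exact ⟨s, ⟨hs, h1.trans ht.2 (ge2_of_not_ge2 h1 h2 hst a)⟩, h1.ge2_refl s, hsr⟩

end WeakOrder

section Regions

variable {X₁ X₂ : Type*} {R : X₁ × X₂ → X₁ × X₂ → Prop}

theorem SEz_subset_SEreg (h1 : A1 R) {z : X₁ × X₂} (hz : z ∈ Theta R \ SEext R) :
    SEz R z ⊆ SEreg R := by
  rcases hz.1.1 with ⟨z', hz'₁, hz'₂, hz'₃, hzz'⟩ | ⟨hext, -⟩
  · exact fun x hx =>
      Or.inl ⟨z', hz'₁, hz'₂, hz'₃, h1.ge1_trans hx.1 hzz'.1, h1.ge2_trans hzz'.2 hx.2⟩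
  · exact absurd ⟨hz.1, hext.symm⟩ hz.2

theorem NWz_subset_NWreg (h1 : A1 R) {z : X₁ × X₂} (hz : z ∈ Theta R \ NWext R) :
    NWz R z ⊆ NWreg R := by
  rcases hz.1.2 with ⟨z', hz'₁, hz'₂, hz'₃, hzz'⟩ | ⟨hext, -⟩
  · exact fun x hx =>
      Or.inl ⟨z', hz'₁, hz'₂, hz'₃, h1.ge2_trans hx.1 hzz'.1, h1.ge1_trans hzz'.2 hx.2⟩
  · exact absurd ⟨hz.1, hext⟩ hz.2

theorem exists_SE_le_of_mem_D1 {a : X₁} (ha : a ∈ D1 R) :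
    ∃ z ∈ Theta R \ SEext R, Ge1 R a z.1 := by
  obtain ⟨⟨p, hp⟩, -⟩ := ha
  obtain ⟨z, hz, hmem⟩ := mem_iUnion₂.1 hp
  exact ⟨z, hz, hmem.1⟩

theorem exists_NW_ge_of_mem_D1 {a : X₁} (ha : a ∈ D1 R) :
    ∃ z ∈ Theta R \ NWext R, Ge1 R z.1 a := by
  obtain ⟨-, ⟨p, hp⟩⟩ := ha
  obtain ⟨z, hz, hmem⟩ := mem_iUnion₂.1 hp
  exact ⟨z, hz, hmem.2⟩

theorem exists_fst_le_fst_le (h1 : A1 R) (h2 : A2 R) {T : Set (X₁ × X₂)} {z z' : X₁ × X₂}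
    (hz : z ∈ T) (hz' : z' ∈ T) : ∃ w ∈ T, Ge1 R z.1 w.1 ∧ Ge1 R z'.1 w.1 := by
  rcases ge1_total h1 h2 z.1 z'.1 with h | h
  · exact ⟨z', hz', h, h1.ge1_refl _⟩
  · exact ⟨z, hz, h1.ge1_refl _, h⟩

theorem exists_fst_ge_fst_ge (h1 : A1 R) (h2 : A2 R) {T : Set (X₁ × X₂)} {z z' : X₁ × X₂}
    (hz : z ∈ T) (hz' : z' ∈ T) : ∃ w ∈ T, Ge1 R w.1 z.1 ∧ Ge1 R w.1 z'.1 := by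
  rcases ge1_total h1 h2 z.1 z'.1 with h | h
  · exact ⟨z, hz, h1.ge1_refl _, h⟩
  · exact ⟨z', hz', h, h1.ge1_refl _⟩

def Icc1 (R : X₁ × X₂ → X₁ × X₂ → Prop) (lo hi : X₁) : Set X₁ :=
  {x | Ge1 R x lo ∧ Ge1 R hi x}

theorem exists_cones_of_mem_D1 (h1 : A1 R) (h2 : A2 R) {a b c : X₁}
    (ha : a ∈ D1 R) (hb : b ∈ D1 R) (hc : c ∈ D1 R) :
    ∃ Z ∈ Theta R \ SEext R, ∃ W ∈ Theta R \ NWext R,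
      a ∈ Icc1 R Z.1 W.1 ∧ b ∈ Icc1 R Z.1 W.1 ∧ c ∈ Icc1 R Z.1 W.1 := by
  obtain ⟨za, hza, haza⟩ := exists_SE_le_of_mem_D1 ha
  obtain ⟨zb, hzb, hbzb⟩ := exists_SE_le_of_mem_D1 hb
  obtain ⟨zc, hzc, hczc⟩ := exists_SE_le_of_mem_D1 hc
  obtain ⟨wa, hwa, hwaa⟩ := exists_NW_ge_of_mem_D1 ha
  obtain ⟨wb, hwb, hwbb⟩ := exists_NW_ge_of_mem_D1 hb
  obtain ⟨wc, hwc, hwcc⟩ := exists_NW_ge_of_mem_D1 hc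
  obtain ⟨z, hz, hzaz, hzbz⟩ := exists_fst_le_fst_le h1 h2 hza hzb
  obtain ⟨Z, hZ, hzZ, hzcZ⟩ := exists_fst_le_fst_le h1 h2 hz hzc
  obtain ⟨w, hw, hwwa, hwwb⟩ := exists_fst_ge_fst_ge h1 h2 hwa hwb
  obtain ⟨W, hW, hWw, hWwc⟩ := exists_fst_ge_fst_ge h1 h2 hw hwc
  refine ⟨Z, hZ, W, hW, ⟨?_, ?_⟩, ⟨?_, ?_⟩, ⟨?_, ?_⟩⟩
  · exact h1.ge1_trans haza (h1.ge1_trans hzaz hzZ)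
  · exact h1.ge1_trans hWw (h1.ge1_trans hwwa hwaa)
  · exact h1.ge1_trans hbzb (h1.ge1_trans hzbz hzZ)
  · exact h1.ge1_trans hWw (h1.ge1_trans hwwb hwbb)
  · exact h1.ge1_trans hczc hzcZ
  · exact h1.ge1_trans hWwc hwcc

end Regions

section Cancellation

variable {X₁ X₂ : Type*} {R : X₁ × X₂ → X₁ × X₂ → Prop}

/-- The cross-region triple cancellation of case (c) of A4. -/
def TCancelAcross (R : X₁ × X₂ → X₁ × X₂ → Prop) (A B : Set (X₁ × X₂)) : Prop :=
  ∀ a b c d : X₁, ∀ p q r s : X₂,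
    In4 A (a,p) (b,q) (c,p) (d,q) → In4 B (a,r) (b,s) (c,r) (d,s) →
    R (b,q) (a,p) → R (a,r) (b,s) → R (c,p) (d,q) → R (c,r) (d,s)

theorem A4.tcancelAcross_NW_SE (h4 : A4 R) (hE : Ess1 R (NWreg R)) :
    TCancelAcross R (NWreg R) (SEreg R) :=
  fun a b c d p q r s hN hS =>
    h4 a b c d p q r s (Or.inr <| Or.inr <| Or.inr <| Or.inr <| Or.inl ⟨hN, hE, hS⟩)

theorem A4.tcancelAcross_SE_NW (h4 : A4 R) (hE : Ess1 R (SEreg R)) :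
    TCancelAcross R (SEreg R) (NWreg R) :=
  fun a b c d p q r s hS hN =>
    h4 a b c d p q r s (Or.inr <| Or.inr <| Or.inr <| Or.inr <| Or.inr ⟨hS, hE, hN⟩)

theorem TCancelAcross.ip {A B : Set (X₁ × X₂)} (hAB : TCancelAcross R A B)
    {b₀ b₁ c d : X₁} {p q r s : X₂}
    (hA : In4 A (b₀,p) (b₁,q) (c,p) (d,q)) (hB : In4 B (b₀,r) (b₁,s) (c,r) (d,s))
    (hpq : IP R (b₁,q) (b₀,p)) (hrs : IP R (b₁,s) (b₀,r)) (h : IP R (d,q) (c,p)) :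
    IP R (d,s) (c,r) :=
  ⟨hAB b₁ b₀ d c q p s r ⟨hA.2.1, hA.1, hA.2.2.2, hA.2.2.1⟩ ⟨hB.2.1, hB.1, hB.2.2.2, hB.2.2.1⟩
      hpq.2 hrs.1 h.1,
    hAB b₀ b₁ c d p q r s hA hB hpq.1 hrs.2 h.2⟩

end Cancellation

section Archimedean

variable {X₁ X₂ : Type*} {R : X₁ × X₂ → X₁ × X₂ → Prop}

theorem isIntervalZ_univ : IsIntervalZ univ := fun _ _ _ _ _ _ _ => mem_univ _

theorem boundedSeq1_const (h1 : A1 R) (a : X₁) (t : X₂) :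
    BoundedSeq1 R univ (fun _ => a) t :=
  ⟨(a, t), (a, t), fun _ _ => ⟨h1.refl _, h1.refl _⟩⟩

theorem boundedSeq2_const (h1 : A1 R) (a : X₁) (t : X₂) :
    BoundedSeq2 R univ (fun _ => t) a :=
  ⟨(a, t), (a, t), fun _ _ => ⟨h1.refl _, h1.refl _⟩⟩

theorem A9.ge1_of_ip_NWz (h9 : A9 R) (h1 : A1 R) {z : X₁ × X₂} (hz : z ∈ NWreg R)
    {x y : X₁} {t : X₂} (hx : (x, t) ∈ NWz R z) (hy : (y, t) ∈ NWz R z)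
    (hip : IP R (x, t) (y, t)) : Ge1 R x y := by
  by_contra hne
  exact infinite_univ <| h9.2.2.1 z hz univ (fun _ => t) x y
    ⟨isIntervalZ_univ, fun h => hne h.1, fun _ _ _ => hip⟩ (boundedSeq2_const h1 x t)
    fun _ _ => ⟨hx, hy⟩

theorem A9.ge1_of_ip_SEz (h9 : A9 R) (h1 : A1 R) {z : X₁ × X₂} (hz : z ∈ SEreg R)
    {x y : X₁} {t : X₂} (hx : (x, t) ∈ SEz R z) (hy : (y, t) ∈ SEz R z)
    (hip : IP R (x, t) (y, t)) : Ge1 R x y := by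
  by_contra hne
  exact infinite_univ <| h9.2.2.2 z hz univ (fun _ => t) x y
    ⟨isIntervalZ_univ, fun h => hne h.1, fun _ _ _ => hip⟩ (boundedSeq2_const h1 x t)
    fun _ _ => ⟨hx, hy⟩

theorem A9.ge2_of_ip_NWz (h9 : A9 R) (h1 : A1 R) {z : X₁ × X₂} (hz : z ∈ NWreg R)
    {a : X₁} {t u : X₂} (ht : (a, t) ∈ NWz R z) (hu : (a, u) ∈ NWz R z)
    (hip : IP R (a, t) (a, u)) : Ge2 R t u := by
  by_contra hne
  exact infinite_univ <| h9.1 z hz univ (fun _ => a) t u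
    ⟨isIntervalZ_univ, fun h => hne h.1, fun _ _ _ => hip⟩ (boundedSeq1_const h1 a t)
    fun _ _ => ⟨ht, hu⟩

theorem A9.ge2_of_ip_SEz (h9 : A9 R) (h1 : A1 R) {z : X₁ × X₂} (hz : z ∈ SEreg R)
    {a : X₁} {t u : X₂} (ht : (a, t) ∈ SEz R z) (hu : (a, u) ∈ SEz R z)
    (hip : IP R (a, t) (a, u)) : Ge2 R t u := by
  by_contra hne
  exact infinite_univ <| h9.2.1 z hz univ (fun _ => a) t u
    ⟨isIntervalZ_univ, fun h => hne h.1, fun _ _ _ => hip⟩ (boundedSeq1_const h1 a t)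
    fun _ _ => ⟨ht, hu⟩

end Archimedean

section AdditiveRepresentation

variable {X₁ X₂ : Type*} {R : X₁ × X₂ → X₁ × X₂ → Prop} {V₁ : X₁ → ℝ} {V₂ : X₂ → ℝ}
  {A : Set (X₁ × X₂)}

theorem AddRep.rel_iff (h : AddRep R V₁ V₂ A) {a b : X₁} {p q : X₂} (hx : (a, p) ∈ A)
    (hy : (b, q) ∈ A) : R (a, p) (b, q) ↔ V₁ b + V₂ q ≤ V₁ a + V₂ p :=
  h _ hx _ hy

theorem AddRep.ip_iff (h : AddRep R V₁ V₂ A) {a b : X₁} {p q : X₂} (hx : (a, p) ∈ A)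
    (hy : (b, q) ∈ A) : IP R (a, p) (b, q) ↔ V₁ a + V₂ p = V₁ b + V₂ q := by
  rw [IP, h.rel_iff hx hy, h.rel_iff hy hx, le_antisymm_iff, and_comm]

theorem AddRep.sp_iff (h : AddRep R V₁ V₂ A) {a b : X₁} {p q : X₂} (hx : (a, p) ∈ A)
    (hy : (b, q) ∈ A) : SP R (a, p) (b, q) ↔ V₁ b + V₂ q < V₁ a + V₂ p := by
  rw [SP, h.rel_iff hx hy, h.rel_iff hy hx, ← lt_iff_le_not_ge]

theorem AddRep.ge1_iff_of_ip (h : AddRep R V₁ V₂ A) (h2 : A2 R) {x y : X₁} {t : X₂}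
    (hx : (x, t) ∈ A) (hy : (y, t) ∈ A) (hip : IP R (x, t) (y, t) → Ge1 R x y) :
    Ge1 R x y ↔ V₁ y ≤ V₁ x := by
  refine ⟨fun hxy => by simpa using (h.rel_iff hx hy).1 (hxy t), fun hle => ?_⟩
  rcases hle.lt_or_eq with hlt | heq
  · exact h2.ge1_of_sp ((h.sp_iff hx hy).2 (by simpa using hlt))
  · exact hip ((h.ip_iff hx hy).2 (by rw [heq]))

theorem AddRep.ge2_iff_of_ip (h : AddRep R V₁ V₂ A) (h2 : A2 R) {a : X₁} {t u : X₂}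
    (ht : (a, t) ∈ A) (hu : (a, u) ∈ A) (hip : IP R (a, t) (a, u) → Ge2 R t u) :
    Ge2 R t u ↔ V₂ u ≤ V₂ t := by
  refine ⟨fun htu => by simpa using (h.rel_iff ht hu).1 (htu a), fun hle => ?_⟩
  rcases hle.lt_or_eq with hlt | heq
  · exact h2.ge2_of_sp ((h.sp_iff ht hu).2 (by simpa using hlt))
  · exact hip ((h.ip_iff ht hu).2 (by rw [heq]))

theorem AddRep.exists_add_eq (h : AddRep R V₁ V₂ A) (h1 : A1 R) (h2 : A2 R) (h8 : A8 R)
    {lo hi c m : X₁} {u v : X₂} (hu : ∀ x ∈ Icc1 R lo hi, (x, u) ∈ A)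
    (hv : ∀ x ∈ Icc1 R lo hi, (x, v) ∈ A) (hc : c ∈ Icc1 R lo hi) (hm : m ∈ Icc1 R lo hi)
    (hmc : Ge1 R m c) (huv : V₂ v ≤ V₂ u) (hcm : V₁ c + V₂ u ≤ V₁ m + V₂ v) :
    ∃ d ∈ Icc1 R lo hi, V₁ d + V₂ v = V₁ c + V₂ u := by
  obtain ⟨d, hd, hmd, hdc⟩ := h8.exists_ip_fst h1 h2 hmc ((h.rel_iff (hv m hm) (hu c hc)).2 hcm)
    ((h.rel_iff (hu c hc) (hv c hc)).2 (by linarith))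
  have hdI : d ∈ Icc1 R lo hi := ⟨h1.ge1_trans hdc hc.1, h1.ge1_trans hm.2 hmd⟩
  exact ⟨d, hdI, (h.ip_iff (hv d hdI) (hu c hc)).1 hd⟩

end AdditiveRepresentation

section MatchedSteps

variable {α : Type*} {I : Set α} {f h : α → ℝ} {δ δ' : ℝ}

def HasMatchedSteps (I : Set α) (f h : α → ℝ) (δ δ' : ℝ) : Prop :=
  ∀ c ∈ I, ∀ m ∈ I, f c + δ ≤ f m → ∃ d ∈ I, f d = f c + δ ∧ h d = h c + δ'

theorem HasMatchedSteps.exists_nsmul (hs : HasMatchedSteps I f h δ δ') (hδ : 0 ≤ δ) {c m : α}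
    (hc : c ∈ I) (hm : m ∈ I) :
    ∀ n : ℕ, f c + n * δ ≤ f m → ∃ d ∈ I, f d = f c + n * δ ∧ h d = h c + n * δ'
  | 0, _ => ⟨c, hc, by simp, by simp⟩
  | n + 1, hn => by
    push_cast at hn ⊢
    obtain ⟨d, hd, hfd, hhd⟩ := hs.exists_nsmul hδ hc hm n (by linarith)
    obtain ⟨e, he, hfe, hhe⟩ := hs d hd m hm (by linarith)
    exact ⟨e, he, by linarith, by linarith⟩

theorem abs_sub_div_sub_lt_one_of_le (hmono : ∀ x ∈ I, ∀ y ∈ I, f x ≤ f y ↔ h x ≤ h y)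
    (hfh : HasMatchedSteps I f h δ δ') (hhf : HasMatchedSteps I h f δ' δ) (hδ : 0 < δ)
    (hδ' : 0 < δ') {b x : α} (hb : b ∈ I) (hx : x ∈ I) (hbx : f b ≤ f x) :
    |(f x - f b) / δ - (h x - h b) / δ'| < 1 := by
  set n := ⌊(f x - f b) / δ⌋₊
  have hfn : n ≤ (f x - f b) / δ := Nat.floor_le (div_nonneg (sub_nonneg.2 hbx) hδ.le)
  have hfn' : (f x - f b) / δ < n + 1 := Nat.lt_floor_add_one _
  rw [le_div_iff₀ hδ] at hfn
  obtain ⟨d, hd, hfd, hhd⟩ := hfh.exists_nsmul hδ.le hb hx n (by linarith)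
  have hdx : h d ≤ h x := (hmono d hd x hx).1 (by linarith)
  have hxd : h x < h d + δ' := by
    by_contra! hle
    obtain ⟨e, he, hhe, hfe⟩ := hhf d hd x hx hle
    have hex := (hmono e he x hx).2 (by linarith)
    rw [div_lt_iff₀ hδ] at hfn'
    linarith
  have hhn : n ≤ (h x - h b) / δ' := by rw [le_div_iff₀ hδ']; linarith
  have hhn' : (h x - h b) / δ' < n + 1 := by rw [div_lt_iff₀ hδ']; linarith
  rw [← le_div_iff₀ hδ] at hfn
  rw [abs_sub_lt_iff]
  constructor <;> linarith

theorem abs_sub_div_sub_lt_one (hmono : ∀ x ∈ I, ∀ y ∈ I, f x ≤ f y ↔ h x ≤ h y)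
    (hfh : HasMatchedSteps I f h δ δ') (hhf : HasMatchedSteps I h f δ' δ) (hδ : 0 < δ)
    (hδ' : 0 < δ') {x y : α} (hx : x ∈ I) (hy : y ∈ I) :
    |(f x - f y) / δ - (h x - h y) / δ'| < 1 := by
  rcases le_total (f y) (f x) with hyx | hxy
  · exact abs_sub_div_sub_lt_one_of_le hmono hfh hhf hδ hδ' hy hx hyx
  · have hrev : (f x - f y) / δ - (h x - h y) / δ' = -((f y - f x) / δ - (h y - h x) / δ') := by
      ring
    rw [hrev, abs_neg]
    exact abs_sub_div_sub_lt_one_of_le hmono hfh hhf hδ hδ' hx hy hxy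

theorem mul_eq_mul_of_forall_exists_abs_lt {u v D E : ℝ}
    (h : ∀ ε > 0, ∃ c : ℝ, |D - c * E| < ε ∧ |u - c * v| < ε) : u * E = v * D := by
  refine sub_eq_zero.1 (abs_nonpos_iff.1 (le_of_forall_pos_lt_add fun ε hε => ?_))
  have hC : 0 < |E| + |v| + 1 := by positivity
  obtain ⟨c, hD, hu⟩ := h (ε / (|E| + |v| + 1)) (div_pos hε hC)
  calc |u * E - v * D| = |(u - c * v) * E - v * (D - c * E)| := by ring_nf
    _ ≤ |u - c * v| * |E| + |v| * |D - c * E| := by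
      rw [← abs_mul, ← abs_mul]; exact abs_sub _ _
    _ ≤ ε / (|E| + |v| + 1) * |E| + |v| * (ε / (|E| + |v| + 1)) := by gcongr
    _ < ε / (|E| + |v| + 1) * (|E| + |v| + 1) := by nlinarith [div_pos hε hC]
    _ = 0 + ε := by field_simp; ring

theorem mul_sub_eq_mul_sub_of_hasMatchedSteps (hmono : ∀ x ∈ I, ∀ y ∈ I, f x ≤ f y ↔ h x ≤ h y)
    (hsteps : ∀ ε > 0, ∃ δ δ', 0 < δ ∧ δ ≤ ε ∧ 0 < δ' ∧
      HasMatchedSteps I f h δ δ' ∧ HasMatchedSteps I h f δ' δ)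
    {a r₀ r₁ : α} (ha : a ∈ I) (hr₀ : r₀ ∈ I) (hr₁ : r₁ ∈ I) :
    (f a - f r₀) * (h r₁ - h r₀) = (h a - h r₀) * (f r₁ - f r₀) := by
  refine mul_eq_mul_of_forall_exists_abs_lt fun ε hε => ?_
  obtain ⟨δ, δ', hδ, hδε, hδ', hfh, hhf⟩ := hsteps ε hε
  have hscale : ∀ {x y}, x ∈ I → y ∈ I → |(f x - f y) - δ / δ' * (h x - h y)| < ε := by
    intro x y hx hy
    calc |(f x - f y) - δ / δ' * (h x - h y)|
        = |δ * ((f x - f y) / δ - (h x - h y) / δ')| := by congr 1; field_simp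
      _ = δ * |(f x - f y) / δ - (h x - h y) / δ'| := by rw [abs_mul, abs_of_pos hδ]
      _ < δ * 1 := by gcongr; exact abs_sub_div_sub_lt_one hmono hfh hhf hδ hδ' hx hy
      _ ≤ ε := by linarith
  exact ⟨δ / δ', hscale hr₁ hr₀, hscale ha hr₀⟩

theorem exists_step_le_add (hmono : ∀ x ∈ I, ∀ y ∈ I, f x ≤ f y ↔ h x ≤ h y)
    (hstep : ∀ c ∈ I, ∀ m ∈ I, f c + δ ≤ f m → ∃ d ∈ I, f d = f c + δ) (hδ : 0 ≤ δ)
    {r₀ r₁ : α} (hr₀ : r₀ ∈ I) (hr₁ : r₁ ∈ I) {n : ℕ} {S : ℝ} (hn : f r₀ + n * δ ≤ f r₁)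
    (hS : h r₁ < h r₀ + n * S) :
    ∃ b₀ ∈ I, ∃ b₁ ∈ I, f b₁ = f b₀ + δ ∧ h b₁ ≤ h b₀ + S := by
  by_contra! hbig
  have hclimb : ∀ k ≤ n, ∃ c ∈ I, f c = f r₀ + k * δ ∧ h r₀ + k * S ≤ h c := by
    intro k hk
    induction k with
    | zero => exact ⟨r₀, hr₀, by simp, by simp⟩
    | succ k ih =>
      obtain ⟨c, hc, hfc, hhc⟩ := ih (by omega)
      have hkn : ((k + 1 : ℕ) : ℝ) * δ ≤ n * δ := by gcongr
      push_cast at hkn ⊢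
      obtain ⟨d, hd, hfd⟩ := hstep c hc r₁ hr₁ (by linarith)
      exact ⟨d, hd, by linarith, by linarith [hbig c hc d hd hfd]⟩
  obtain ⟨c, hc, hfc, hhc⟩ := hclimb n le_rfl
  have := (hmono c hc r₁ hr₁).1 (by linarith)
  linarith

end MatchedSteps

section Cones

variable {X₁ X₂ : Type*} {R : X₁ × X₂ → X₁ × X₂ → Prop} {V₁ : X₁ → ℝ} {V₂ : X₂ → ℝ}
  {Z W : X₁ × X₂}

theorem AddRep.ge1_iff_of_NWz (h : AddRep R V₁ V₂ (NWz R W)) (h1 : A1 R) (h2 : A2 R)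
    (h9 : A9 R) (hW : W ∈ NWreg R) {x y : X₁} {t : X₂} (hx : (x, t) ∈ NWz R W)
    (hy : (y, t) ∈ NWz R W) : Ge1 R x y ↔ V₁ y ≤ V₁ x :=
  h.ge1_iff_of_ip h2 hx hy (h9.ge1_of_ip_NWz h1 hW hx hy)

theorem AddRep.ge1_iff_of_SEz (h : AddRep R V₁ V₂ (SEz R Z)) (h1 : A1 R) (h2 : A2 R)
    (h9 : A9 R) (hZ : Z ∈ SEreg R) {x y : X₁} {t : X₂} (hx : (x, t) ∈ SEz R Z)
    (hy : (y, t) ∈ SEz R Z) : Ge1 R x y ↔ V₁ y ≤ V₁ x :=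
  h.ge1_iff_of_ip h2 hx hy (h9.ge1_of_ip_SEz h1 hZ hx hy)

theorem AddRep.exists_lt_of_SEz (h : AddRep R V₁ V₂ (SEz R Z)) (h1 : A1 R) (h2 : A2 R)
    (h9 : A9 R) (hZ : Z ∈ Theta R \ SEext R) {x : X₁} (hx : Ge1 R x Z.1) :
    ∃ y, Ge2 R Z.2 y ∧ V₂ y < V₂ Z.2 := by
  obtain ⟨y, hy⟩ : ∃ y, ¬ Ge2 R y Z.2 := by
    by_contra! hmin
    exact hZ.2 ⟨hZ.1, Or.inl hmin⟩
  have hZy := ge2_of_not_ge2 h1 h2 hy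
  have hxy : (x, y) ∈ SEz R Z := ⟨hx, hZy⟩
  have hxZ : (x, Z.2) ∈ SEz R Z := ⟨hx, h1.ge2_refl _⟩
  exact ⟨y, hZy, not_le.1 fun hle =>
    hy ((h.ge2_iff_of_ip h2 hxy hxZ (h9.ge2_of_ip_SEz h1 hZ.1.1 hxy hxZ)).2 hle)⟩

theorem AddRep.exists_gt_of_NWz (h : AddRep R V₁ V₂ (NWz R W)) (h1 : A1 R) (h2 : A2 R)
    (h9 : A9 R) (hW : W ∈ Theta R \ NWext R) {x : X₁} (hx : Ge1 R W.1 x) :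
    ∃ p, Ge2 R p W.2 ∧ V₂ W.2 < V₂ p := by
  obtain ⟨p, hp⟩ : ∃ p, ¬ Ge2 R W.2 p := by
    by_contra! hmax
    exact hW.2 ⟨hW.1, Or.inr hmax⟩
  have hpW := ge2_of_not_ge2 h1 h2 hp
  have hxp : (x, p) ∈ NWz R W := ⟨hpW, hx⟩
  have hxW : (x, W.2) ∈ NWz R W := ⟨h1.ge2_refl _, hx⟩
  exact ⟨p, hpW, not_le.1 fun hle =>
    hp ((h.ge2_iff_of_ip h2 hxW hxp (h9.ge2_of_ip_NWz h1 hW.1.2 hxW hxp)).2 hle)⟩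

theorem AddRep.exists_between_of_NWz (h : AddRep R V₁ V₂ (NWz R W)) (h1 : A1 R) (h2 : A2 R)
    (h8 : A8 R) (hdense : OrderDense R) {x : X₁} {p q : X₂} (hx : Ge1 R W.1 x)
    (hp : Ge2 R p W.2) (hq : Ge2 R q W.2) (hqp : V₂ q < V₂ p) :
    ∃ t, Ge2 R t W.2 ∧ V₂ q < V₂ t ∧ V₂ t < V₂ p := by
  have hxp : (x, p) ∈ NWz R W := ⟨hp, hx⟩
  have hxq : (x, q) ∈ NWz R W := ⟨hq, hx⟩
  have hsp : SP R (x, p) (x, q) := (h.sp_iff hxp hxq).2 (by linarith)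
  obtain ⟨z, hpz, hzq⟩ := hdense _ _ hsp
  obtain ⟨t, ht, -, htq⟩ := h8.exists_ip_snd h1 h2 (h2.ge2_of_sp hsp) hpz.1 hzq.1
  have hxt : (x, t) ∈ NWz R W := ⟨h1.ge2_trans htq hq, hx⟩
  have hqt := (h.sp_iff hxt hxq).1 (h1.sp_of_ip_of_sp ht hzq)
  have htp := (h.sp_iff hxp hxt).1 (h1.sp_of_sp_of_ip hpz ht.symm)
  exact ⟨t, hxt.1, by linarith, by linarith⟩

theorem AddRep.exists_small_gap_of_NWz (h : AddRep R V₁ V₂ (NWz R W)) (h1 : A1 R) (h2 : A2 R)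
    (h8 : A8 R) (h9 : A9 R) (hdense : OrderDense R) (hW : W ∈ Theta R \ NWext R) {x : X₁}
    (hx : Ge1 R W.1 x) {ε : ℝ} (hε : 0 < ε) :
    ∃ p q, Ge2 R p W.2 ∧ Ge2 R q W.2 ∧ 0 < V₂ p - V₂ q ∧ V₂ p - V₂ q ≤ ε := by
  obtain ⟨p₀, hp₀, hW₀⟩ := h.exists_gt_of_NWz h1 h2 h9 hW hx
  have hhalve : ∀ k : ℕ, ∃ p q, Ge2 R p W.2 ∧ Ge2 R q W.2 ∧ 0 < V₂ p - V₂ q ∧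
      2 ^ k * (V₂ p - V₂ q) ≤ V₂ p₀ - V₂ W.2 := by
    intro k
    induction k with
    | zero => exact ⟨p₀, W.2, hp₀, h1.ge2_refl _, by linarith, by simp⟩
    | succ k ih =>
      obtain ⟨p, q, hp, hq, hpos, hle⟩ := ih
      obtain ⟨t, ht, hqt, htp⟩ := h.exists_between_of_NWz h1 h2 h8 hdense hx hp hq (by linarith)
      have h2k : (0 : ℝ) < 2 ^ k := by positivity
      rw [pow_succ]
      rcases le_total (V₂ t - V₂ q) (V₂ p - V₂ t) with hlow | hhigh
      · exact ⟨t, q, ht, hq, by linarith, by nlinarith⟩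
      · exact ⟨p, t, hp, ht, by linarith, by nlinarith⟩
  obtain ⟨k, hk⟩ := pow_unbounded_of_one_lt ((V₂ p₀ - V₂ W.2) / ε) one_lt_two
  obtain ⟨p, q, hp, hq, hpos, hle⟩ := hhalve k
  rw [div_lt_iff₀ hε] at hk
  exact ⟨p, q, hp, hq, hpos, by nlinarith⟩

theorem AddRep.exists_step_of_NWz (h : AddRep R V₁ V₂ (NWz R W)) (h1 : A1 R) (h2 : A2 R)
    (h8 : A8 R) (h9 : A9 R) (hW : W ∈ NWreg R) {lo : X₁} {p q : X₂} (hp : Ge2 R p W.2)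
    (hq : Ge2 R q W.2) (hqp : V₂ q ≤ V₂ p) :
    ∀ c ∈ Icc1 R lo W.1, ∀ m ∈ Icc1 R lo W.1, V₁ c + (V₂ p - V₂ q) ≤ V₁ m →
      ∃ d ∈ Icc1 R lo W.1, V₁ d + V₂ q = V₁ c + V₂ p := by
  intro c hc m hm hcm
  have hmc := (h.ge1_iff_of_NWz (x := m) (y := c) h1 h2 h9 hW ⟨h1.ge2_refl _, hm.2⟩
    ⟨h1.ge2_refl _, hc.2⟩).2 (by linarith)
  exact h.exists_add_eq h1 h2 h8 (fun x hx => ⟨hp, hx.2⟩) (fun x hx => ⟨hq, hx.2⟩) hc hm hmc hqp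
    (by linarith)

theorem AddRep.exists_step_of_SEz (h : AddRep R V₁ V₂ (SEz R Z)) (h1 : A1 R) (h2 : A2 R)
    (h8 : A8 R) (h9 : A9 R) (hZ : Z ∈ SEreg R) {hi : X₁} {r s : X₂} (hr : Ge2 R Z.2 r)
    (hs : Ge2 R Z.2 s) (hsr : V₂ s ≤ V₂ r) :
    ∀ c ∈ Icc1 R Z.1 hi, ∀ m ∈ Icc1 R Z.1 hi, V₁ c + (V₂ r - V₂ s) ≤ V₁ m →
      ∃ d ∈ Icc1 R Z.1 hi, V₁ d + V₂ s = V₁ c + V₂ r := by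
  intro c hc m hm hcm
  have hmc := (h.ge1_iff_of_SEz (x := m) (y := c) h1 h2 h9 hZ ⟨hm.1, h1.ge2_refl _⟩
    ⟨hc.1, h1.ge2_refl _⟩).2 (by linarith)
  exact h.exists_add_eq h1 h2 h8 (fun x hx => ⟨hx.1, hr⟩) (fun x hx => ⟨hx.1, hs⟩) hc hm hmc hsr
    (by linarith)

variable {V₁s V₁n : X₁ → ℝ} {V₂s V₂n : X₂ → ℝ}

theorem V₁n_le_iff_V₁s_le (hS : AddRep R V₁s V₂s (SEz R Z)) (hN : AddRep R V₁n V₂n (NWz R W))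
    (h1 : A1 R) (h2 : A2 R) (h9 : A9 R) (hZ : Z ∈ SEreg R) (hW : W ∈ NWreg R) :
    ∀ x ∈ Icc1 R Z.1 W.1, ∀ y ∈ Icc1 R Z.1 W.1, V₁n x ≤ V₁n y ↔ V₁s x ≤ V₁s y :=
  fun x hx y hy =>
    (hN.ge1_iff_of_NWz (x := y) (y := x) h1 h2 h9 hW ⟨h1.ge2_refl W.2, hy.2⟩
      ⟨h1.ge2_refl W.2, hx.2⟩).symm.trans
    (hS.ge1_iff_of_SEz (x := y) (y := x) h1 h2 h9 hZ ⟨hy.1, h1.ge2_refl Z.2⟩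
      ⟨hx.1, h1.ge2_refl Z.2⟩)

theorem hasMatchedSteps_of_calibration (hS : AddRep R V₁s V₂s (SEz R Z))
    (hN : AddRep R V₁n V₂n (NWz R W)) (h1 : A1 R) (h2 : A2 R) (h4 : A4 R) (h8 : A8 R)
    (h9 : A9 R) (hE1s : Ess1 R (SEreg R)) (hE1n : Ess1 R (NWreg R))
    (hZ : Z ∈ Theta R \ SEext R) (hW : W ∈ Theta R \ NWext R) {b₀ b₁ : X₁} {p q r s : X₂}
    (hb₀ : b₀ ∈ Icc1 R Z.1 W.1) (hb₁ : b₁ ∈ Icc1 R Z.1 W.1) (hp : Ge2 R p W.2)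
    (hq : Ge2 R q W.2) (hr : Ge2 R Z.2 r) (hs : Ge2 R Z.2 s) (hqp : V₂n q ≤ V₂n p)
    (hsr : V₂s s ≤ V₂s r) (hpq : IP R (b₁, q) (b₀, p)) (hrs : IP R (b₁, s) (b₀, r)) :
    HasMatchedSteps (Icc1 R Z.1 W.1) V₁n V₁s (V₂n p - V₂n q) (V₂s r - V₂s s) ∧
      HasMatchedSteps (Icc1 R Z.1 W.1) V₁s V₁n (V₂s r - V₂s s) (V₂n p - V₂n q) := by
  have hNW : ∀ x ∈ Icc1 R Z.1 W.1, ∀ t, Ge2 R t W.2 → (x, t) ∈ NWz R W :=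
    fun x hx t ht => ⟨ht, hx.2⟩
  have hSE : ∀ x ∈ Icc1 R Z.1 W.1, ∀ t, Ge2 R Z.2 t → (x, t) ∈ SEz R Z :=
    fun x hx t ht => ⟨hx.1, ht⟩
  have hNWreg := NWz_subset_NWreg h1 hW
  have hSEreg := SEz_subset_SEreg h1 hZ
  have hcross : ∀ c ∈ Icc1 R Z.1 W.1, ∀ d ∈ Icc1 R Z.1 W.1,
      (IP R (d, q) (c, p) ↔ IP R (d, s) (c, r)) := by
    intro c hc d hd
    have hA : In4 (NWreg R) (b₀, p) (b₁, q) (c, p) (d, q) :=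
      ⟨hNWreg (hNW _ hb₀ _ hp), hNWreg (hNW _ hb₁ _ hq), hNWreg (hNW _ hc _ hp),
        hNWreg (hNW _ hd _ hq)⟩
    have hB : In4 (SEreg R) (b₀, r) (b₁, s) (c, r) (d, s) :=
      ⟨hSEreg (hSE _ hb₀ _ hr), hSEreg (hSE _ hb₁ _ hs), hSEreg (hSE _ hc _ hr),
        hSEreg (hSE _ hd _ hs)⟩
    exact ⟨(h4.tcancelAcross_NW_SE hE1n).ip hA hB hpq hrs,
      (h4.tcancelAcross_SE_NW hE1s).ip hB hA hrs hpq⟩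
  refine ⟨fun c hc m hm hcm => ?_, fun c hc m hm hcm => ?_⟩
  · obtain ⟨d, hd, hval⟩ := hN.exists_step_of_NWz h1 h2 h8 h9 hW.1.2 hp hq hqp c hc m hm hcm
    have hsval := (hS.ip_iff (hSE _ hd _ hs) (hSE _ hc _ hr)).1 <|
      (hcross c hc d hd).1 ((hN.ip_iff (hNW _ hd _ hq) (hNW _ hc _ hp)).2 hval)
    exact ⟨d, hd, by linarith, by linarith⟩
  · obtain ⟨d, hd, hval⟩ := hS.exists_step_of_SEz h1 h2 h8 h9 hZ.1.1 hr hs hsr c hc m hm hcm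
    have hnval := (hN.ip_iff (hNW _ hd _ hq) (hNW _ hc _ hp)).1 <|
      (hcross c hc d hd).2 ((hS.ip_iff (hSE _ hd _ hs) (hSE _ hc _ hr)).2 hval)
    exact ⟨d, hd, by linarith, by linarith⟩

theorem exists_hasMatchedSteps (hS : AddRep R V₁s V₂s (SEz R Z))
    (hN : AddRep R V₁n V₂n (NWz R W)) (h1 : A1 R) (h2 : A2 R) (h4 : A4 R) (h8 : A8 R)
    (h9 : A9 R) (hdense : OrderDense R) (hE1s : Ess1 R (SEreg R)) (hE1n : Ess1 R (NWreg R))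
    (hZ : Z ∈ Theta R \ SEext R) (hW : W ∈ Theta R \ NWext R) {r₀ r₁ : X₁}
    (hr₀ : r₀ ∈ Icc1 R Z.1 W.1) (hr₁ : r₁ ∈ Icc1 R Z.1 W.1) (hr : V₁n r₀ < V₁n r₁) {ε : ℝ}
    (hε : 0 < ε) :
    ∃ δ δ', 0 < δ ∧ δ ≤ ε ∧ 0 < δ' ∧ HasMatchedSteps (Icc1 R Z.1 W.1) V₁n V₁s δ δ' ∧
      HasMatchedSteps (Icc1 R Z.1 W.1) V₁s V₁n δ' δ := by
  have hmono := V₁n_le_iff_V₁s_le hS hN h1 h2 h9 hZ.1.1 hW.1.2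
  obtain ⟨y, hZy, hyZ⟩ := hS.exists_lt_of_SEz h1 h2 h9 hZ hr₀.1
  have hS0 : 0 < V₂s Z.2 - V₂s y := by linarith
  have hsr : V₁s r₀ ≤ V₁s r₁ := (hmono r₀ hr₀ r₁ hr₁).1 hr.le
  -- `n` NW steps will fit between `r₀` and `r₁`, while `n` SE steps of the full spread overshoot.
  obtain ⟨n, hn⟩ := exists_nat_gt ((V₁s r₁ - V₁s r₀) / (V₂s Z.2 - V₂s y))
  have hn0 : (0 : ℝ) < n := (div_nonneg (by linarith) hS0.le).trans_lt hn
  rw [div_lt_iff₀ hS0] at hn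
  obtain ⟨p, q, hp, hq, hδ, hδε⟩ := hN.exists_small_gap_of_NWz h1 h2 h8 h9 hdense hW hr₀.2
    (lt_min hε (div_pos (sub_pos.2 hr) hn0))
  have hnδ : V₁n r₀ + n * (V₂n p - V₂n q) ≤ V₁n r₁ := by
    have := (le_div_iff₀ hn0).1 (hδε.trans (min_le_right _ _))
    linarith
  have hstep := hN.exists_step_of_NWz (lo := Z.1) h1 h2 h8 h9 hW.1.2 hp hq
    (sub_nonneg.1 hδ.le)
  obtain ⟨b₀, hb₀, b₁, hb₁, hfb, hhb⟩ := exists_step_le_add (S := V₂s Z.2 - V₂s y) hmono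
    (fun c hc m hm hcm => (hstep c hc m hm hcm).imp fun d ⟨hd, hval⟩ => ⟨hd, by linarith⟩)
    hδ.le hr₀ hr₁ hnδ (by linarith)
  have hb : V₁s b₀ < V₁s b₁ :=
    lt_of_not_ge fun hle => by linarith [(hmono b₁ hb₁ b₀ hb₀).2 hle]
  obtain ⟨s, hs, hZs, -⟩ := h8.exists_ip_snd h1 h2 hZy
    ((hS.rel_iff ⟨hb₁.1, h1.ge2_refl _⟩ ⟨hb₀.1, h1.ge2_refl _⟩).2 (by linarith))
    ((hS.rel_iff ⟨hb₀.1, h1.ge2_refl _⟩ ⟨hb₁.1, hZy⟩).2 (by linarith))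
  have hsval := (hS.ip_iff ⟨hb₁.1, hZs⟩ ⟨hb₀.1, h1.ge2_refl _⟩).1 hs
  have hpq : IP R (b₁, q) (b₀, p) := (hN.ip_iff ⟨hq, hb₁.2⟩ ⟨hp, hb₀.2⟩).2 (by linarith)
  obtain ⟨hfh, hhf⟩ := hasMatchedSteps_of_calibration hS hN h1 h2 h4 h8 h9 hE1s hE1n hZ hW
    hb₀ hb₁ hp hq (h1.ge2_refl _) hZs (by linarith) (by linarith) hpq hs
  exact ⟨_, _, hδ, hδε.trans (min_le_left _ _), by linarith, hfh, hhf⟩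

end Cones

theorem align_first_value_functions_general {X₁ X₂ : Type*}
    (R : X₁ × X₂ → X₁ × X₂ → Prop)
    (h1 : A1 R) (h2 : A2 R) (h4 : A4 R) (h8 : A8 R) (h9 : A9 R)
    (hdense : OrderDense R)
    (hE1s : Ess1 R (SEreg R))
    (hE1n : Ess1 R (NWreg R))
    (V₁s : X₁ → ℝ) (V₂s : X₂ → ℝ) (V₁n : X₁ → ℝ) (V₂n : X₂ → ℝ)
    (hs : ∀ z ∈ Theta R \ SEext R, AddRep R V₁s V₂s (SEz R z))
    (hn : ∀ z ∈ Theta R \ NWext R, AddRep R V₁n V₂n (NWz R z))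
    (r0 r1 : X₁) (hr0 : r0 ∈ D1 R) (hr1 : r1 ∈ D1 R)
    (h0s : V₁s r0 = 0) (h0n : V₁n r0 = 0) (h1s : V₁s r1 = 1) (h1n : V₁n r1 = 1) :
    ∀ a ∈ D1 R, V₁s a = V₁n a := by
  intro a ha
  obtain ⟨Z, hZ, W, hW, haI, hr0I, hr1I⟩ := exists_cones_of_mem_D1 h1 h2 ha hr0 hr1
  have hmono := V₁n_le_iff_V₁s_le (hs Z hZ) (hn W hW) h1 h2 h9 hZ.1.1 hW.1.2
  have haffine := mul_sub_eq_mul_sub_of_hasMatchedSteps hmono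
    (fun ε hε => exists_hasMatchedSteps (hs Z hZ) (hn W hW) h1 h2 h4 h8 h9 hdense hE1s hE1n
      hZ hW hr0I hr1I (by linarith) hε) haI hr0I hr1I
  rw [h0s, h0n, h1s, h1n] at haffine
  linarith

/-- Alignment of the first-coordinate value functions of the SE and NW representations. -/
theorem align_first_value_functions {X₁ X₂ : Type*} [Nonempty X₁] [Nonempty X₂]
    (R : X₁ × X₂ → X₁ × X₂ → Prop)
    (h1 : A1 R) (h2 : A2 R) (h3 : A3 R) (h4 : A4 R) (h8 : A8 R) (h9 : A9 R)
    (hdense : OrderDense R)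
    (hE1s : Ess1 R (SEreg R)) (hE2s : Ess2 R (SEreg R))
    (hE1n : Ess1 R (NWreg R)) (hE2n : Ess2 R (NWreg R))
    (V₁s : X₁ → ℝ) (V₂s : X₂ → ℝ) (V₁n : X₁ → ℝ) (V₂n : X₂ → ℝ)
    (hs : ∀ z ∈ Theta R \ SEext R, AddRep R V₁s V₂s (SEz R z))
    (hn : ∀ z ∈ Theta R \ NWext R, AddRep R V₁n V₂n (NWz R z))
    (r0 r1 : X₁) (hr0 : r0 ∈ D1 R) (hr1 : r1 ∈ D1 R)
    (hord : Ge1 R r1 r0) (hord' : ¬ Ge1 R r0 r1)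
    (h0s : V₁s r0 = 0) (h0n : V₁n r0 = 0) (h1s : V₁s r1 = 1) (h1n : V₁n r1 = 1) :
    ∀ a ∈ D1 R, V₁s a = V₁n a :=
  align_first_value_functions_general R h1 h2 h4 h8 h9 hdense hE1s hE1n V₁s V₂s V₁n V₂n hs hn r0 r1
    hr0 hr1 h0s h0n h1s h1n
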